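/- The natural inclusion S(∞)^{n+1} → 𝔾 induces a bijection of double coset spaces K(α) \ S(∞)^{n+1} / K(β) ≅ 𝕂(α) \ 𝔾 / 𝕂(β). -/

import Mathlib

/-!
Surjectivity: for `g ∈ 𝔾` pick `w` fixing `1, …, β` with `g₀ w` finitely supported; then every
`gᵢ w = (gᵢ g₀⁻¹) (g₀ w)` is finitely supported, so `g (w, …, w) ∈ S(∞)^{n+1}`.

Injectivity: let `yᵢ = u xᵢ v` with `x, y ∈ S(∞)^{n+1}` and `u, v ∈ S̄(∞)` fixing `1, …, α` resp.
`1, …, β`. Pick `w` fixing the finite set made of `1, …, α`, `x₀(1, …, β)` and the supports of the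
`cᵢ = xᵢ x₀⁻¹`, with `s = u w` finitely supported. As `w` commutes with every `cᵢ`,
`yᵢ = u cᵢ u⁻¹ y₀ = s cᵢ s⁻¹ y₀ = s xᵢ t` for `t = x₀⁻¹ s⁻¹ y₀`, and `s`, `t` are finitely
supported and fix `1, …, α` resp. `1, …, β`.
-/

/-- The subgroup `S(∞)` of finitely supported permutations of `ℕ`
inside the group `S̄(∞)` of all permutations of `ℕ`. -/
def finSupp : Subgroup (Equiv.Perm ℕ) where
  carrier := {g | {n | g n ≠ n}.Finite}
  one_mem' := by simp
  mul_mem' := by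
    intro a b ha hb
    refine (Set.Finite.union ha hb).subset fun n hn => ?_
    simp only [Set.mem_setOf_eq, Equiv.Perm.mul_apply] at hn
    by_cases h : b n = n
    · exact Or.inl (by simpa [h] using hn)
    · exact Or.inr h
  inv_mem' := by
    intro a ha
    refine ha.subset fun n hn => ?_
    simp only [Set.mem_setOf_eq] at hn ⊢
    intro h
    apply hn
    have h2 := congrArg (fun x => a⁻¹ x) h
    simpa using h2.symm

/-- The group `𝔾` of tuples `(g₁, …, g_{n+1})` of permutations of `ℕ` with
`gᵢ gⱼ⁻¹` finitely supported for all `i, j`. -/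
def bbG (n : ℕ) : Subgroup (Fin (n + 1) → Equiv.Perm ℕ) where
  carrier := {g | ∀ i j, g i * (g j)⁻¹ ∈ finSupp}
  one_mem' := by intro i j; simpa using finSupp.one_mem
  mul_mem' := by
    intro a b ha hb i j
    have key : (a * b) i * ((a * b) j)⁻¹
        = (a i * (b i * (b j)⁻¹) * (a i)⁻¹) * (a i * (a j)⁻¹) := by
      simp [Pi.mul_apply, mul_assoc]
    rw [key]
    have hn : Subgroup.Normal finSupp := by
      constructor
      intro x hx k
      refine (hx.image k).subset fun n hn => ?_
      simp only [Set.mem_setOf_eq, Equiv.Perm.mul_apply] at hn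
      refine ⟨k⁻¹ n, ?_, by simp⟩
      intro h
      apply hn
      rw [h]
      simp
    exact mul_mem (hn.conj_mem _ (hb i j) (a i)) (ha i j)
  inv_mem' := by
    intro a ha i j
    have key : (a⁻¹) i * ((a⁻¹) j)⁻¹ = (a i)⁻¹ * (a j * (a i)⁻¹) * ((a i)⁻¹)⁻¹ := by
      simp [mul_assoc]
    rw [key]
    have hn : Subgroup.Normal finSupp := by
      constructor
      intro x hx k
      refine (hx.image k).subset fun n hn => ?_
      simp only [Set.mem_setOf_eq, Equiv.Perm.mul_apply] at hn
      refine ⟨k⁻¹ n, ?_, by simp⟩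
      intro h
      apply hn
      rw [h]
      simp
    exact hn.conj_mem _ (ha j i) _

/-- `S(∞)^{n+1}` as a subgroup of `S̄(∞)^{n+1}`. -/
def Gfin (n : ℕ) : Subgroup (Fin (n + 1) → Equiv.Perm ℕ) :=
  Subgroup.pi Set.univ fun _ => finSupp

/-- The diagonal subgroup `𝕂 = {(g, g, …, g) : g ∈ S̄(∞)}` of `S̄(∞)^{n+1}`. -/
def diagSub (n : ℕ) : Subgroup (Fin (n + 1) → Equiv.Perm ℕ) where
  carrier := {g | ∀ i j, g i = g j}
  one_mem' := fun _ _ => rfl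
  mul_mem' := by
    intro a b ha hb i j
    simp [Pi.mul_apply, ha i j, hb i j]
  inv_mem' := by
    intro a ha i j
    simp [Pi.inv_apply, ha i j]

/-- The subgroup of permutations of `ℕ` fixing the points `1, …, α`. -/
def fixSub (α : ℕ) : Subgroup (Equiv.Perm ℕ) where
  carrier := {g | ∀ m, 1 ≤ m → m ≤ α → g m = m}
  one_mem' := by intro m _ _; rfl
  mul_mem' := by
    intro a b ha hb m h1 h2
    simp only [Equiv.Perm.mul_apply]
    rw [hb m h1 h2, ha m h1 h2]
  inv_mem' := by
    intro a ha m h1 h2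
    have h := ha m h1 h2
    have h2 := congrArg (fun x => a⁻¹ x) h
    simpa using h2.symm

/-- The diagonal subgroup `𝕂(α)` of tuples `(h, …, h)` with `h ∈ S̄(∞)` fixing `1, …, α`. -/
def diagFix (n α : ℕ) : Subgroup (Fin (n + 1) → Equiv.Perm ℕ) where
  carrier := {g | (∀ i, g i ∈ fixSub α) ∧ ∀ i j, g i = g j}
  one_mem' := ⟨fun _ => one_mem _, fun _ _ => rfl⟩
  mul_mem' := by
    rintro a b ⟨ha1, ha2⟩ ⟨hb1, hb2⟩
    exact ⟨fun i => mul_mem (ha1 i) (hb1 i),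
      fun i j => by simp [Pi.mul_apply, ha2 i j, hb2 i j]⟩
  inv_mem' := by
    rintro a ⟨h1, h2⟩
    exact ⟨fun i => inv_mem (h1 i), fun i j => by simp [Pi.inv_apply, h2 i j]⟩

theorem Gfin_le_bbG (n : ℕ) : Gfin n ≤ bbG n := by
  intro g hg i j
  have h := (Subgroup.mem_pi Set.univ).mp hg
  exact mul_mem (h i (Set.mem_univ i)) (inv_mem (h j (Set.mem_univ j)))

open Equiv MulAction

section DoubleCosetInclusion

variable {G : Type*} [Group G] {P Q H K : Subgroup G}

theorem DoubleCoset.exists_equiv_quotient_subgroupOf_of_le (hPQ : P ≤ Q)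
    (hsurj : ∀ q ∈ Q, ∃ h ∈ H ⊓ Q, ∃ k ∈ K ⊓ Q, h * q * k ∈ P)
    (hinj : ∀ x ∈ P, ∀ y ∈ P, ∀ h ∈ H ⊓ Q, ∀ k ∈ K ⊓ Q, y = h * x * k →
      ∃ h' ∈ H ⊓ P, ∃ k' ∈ K ⊓ P, y = h' * x * k') :
    ∃ F : DoubleCoset.Quotient ((H.subgroupOf P : Subgroup P) : Set P) (K.subgroupOf P) ≃
        DoubleCoset.Quotient ((H.subgroupOf Q : Subgroup Q) : Set Q) (K.subgroupOf Q),
      ∀ g : P, F (DoubleCoset.mk _ _ g) = DoubleCoset.mk _ _ (Subgroup.inclusion hPQ g) := by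
  have hrel : ∀ x y : P, DoubleCoset.setoid (H.subgroupOf P : Set P) (K.subgroupOf P) x y →
      DoubleCoset.setoid (H.subgroupOf Q : Set Q) (K.subgroupOf Q)
        (Subgroup.inclusion hPQ x) (Subgroup.inclusion hPQ y) := by
    intro x y hxy
    obtain ⟨h, hh, k, hk, rfl⟩ := DoubleCoset.rel_iff.1 hxy
    exact DoubleCoset.rel_iff.2 ⟨Subgroup.inclusion hPQ h, hh, Subgroup.inclusion hPQ k, hk, rfl⟩
  refine ⟨Equiv.ofBijective (Quotient.map' (Subgroup.inclusion hPQ) hrel) ⟨?_, ?_⟩, fun _ => rfl⟩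
  · rintro ⟨x⟩ ⟨y⟩ hxy
    obtain ⟨⟨h, hQ⟩, hh, ⟨k, kQ⟩, hk, he⟩ := (DoubleCoset.eq _ _ _ _).1 hxy
    obtain ⟨h', ⟨h'H, h'P⟩, k', ⟨k'K, k'P⟩, he'⟩ :=
      hinj x x.2 y y.2 h ⟨hh, hQ⟩ k ⟨hk, kQ⟩ (congrArg Subtype.val he)
    exact (DoubleCoset.eq _ _ _ _).2 ⟨⟨h', h'P⟩, h'H, ⟨k', k'P⟩, k'K, Subtype.ext he'⟩
  · rintro ⟨q, hq⟩
    obtain ⟨h, ⟨hH, hQ⟩, k, ⟨kK, kQ⟩, hP⟩ := hsurj q hq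
    refine ⟨DoubleCoset.mk _ _ ⟨h * q * k, hP⟩, (DoubleCoset.eq _ _ _ _).2 ?_⟩
    refine ⟨⟨h, hQ⟩⁻¹, inv_mem hH, ⟨k, kQ⟩⁻¹, inv_mem kK, Subtype.ext ?_⟩
    simp [mul_assoc]

end DoubleCosetInclusion

theorem swap_mem_finSupp (a b : ℕ) : swap a b ∈ finSupp :=
  (Set.toFinite {a, b}).subset fun m hm => by
    by_contra h
    simp only [Set.mem_insert_iff, Set.mem_singleton_iff, not_or] at h
    exact hm (swap_apply_of_ne_of_ne h.1 h.2)

theorem exists_mem_fixingSubgroup_mul_mem_finSupp (u : Perm ℕ) {A : Set ℕ} (hA : A.Finite) :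
    ∃ w ∈ fixingSubgroup (Perm ℕ) A, u * w ∈ finSupp := by
  induction A, hA using Set.Finite.induction_on with
  | empty => exact ⟨u⁻¹, by simp, by simp⟩
  | @insert a A haA _ ih =>
    obtain ⟨w, hw, huw⟩ := ih
    rw [mem_fixingSubgroup_iff] at hw
    refine ⟨w * swap a (w⁻¹ a), ?_, by simpa [mul_assoc] using mul_mem huw (swap_mem_finSupp _ _)⟩
    rw [mem_fixingSubgroup_iff]
    rintro x (rfl | hx)
    · simp
    · have hxa : x ≠ a := fun h => haA (h ▸ hx)
      have hxw : x ≠ w⁻¹ a := fun h => hxa (by simpa [h] using (hw x hx).symm)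
      simpa only [Perm.smul_def, Perm.mul_apply, swap_apply_of_ne_of_ne hxa hxw] using hw x hx

theorem exists_finSupp_eq_mul_mul {ι : Type*} [Finite ι] [Nonempty ι] {B C : Set ℕ}
    (hB : B.Finite) (hC : C.Finite) {x y : ι → Perm ℕ} (hx : ∀ i, x i ∈ finSupp)
    (hy : ∀ i, y i ∈ finSupp) {u v : Perm ℕ} (hu : u ∈ fixingSubgroup (Perm ℕ) B)
    (hv : v ∈ fixingSubgroup (Perm ℕ) C) (hxy : ∀ i, y i = u * x i * v) :
    ∃ s ∈ finSupp ⊓ fixingSubgroup (Perm ℕ) B, ∃ t ∈ finSupp ⊓ fixingSubgroup (Perm ℕ) C,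
      ∀ i, y i = s * x i * t := by
  obtain ⟨i₀⟩ := ‹Nonempty ι›
  set c : ι → Perm ℕ := fun i => x i * (x i₀)⁻¹
  have hcfin : ∀ i, c i ∈ finSupp := fun i => mul_mem (hx i) (inv_mem (hx i₀))
  set A : Set ℕ := B ∪ x i₀ '' C ∪ ⋃ i, {m | c i m ≠ m}
  have hA : A.Finite := (hB.union (hC.image _)).union (Set.finite_iUnion hcfin)
  obtain ⟨w, hw, huw⟩ := exists_mem_fixingSubgroup_mul_mem_finSupp u hA
  have hwA : ∀ m ∈ A, w m = m := (mem_fixingSubgroup_iff _).1 hw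
  -- `w` fixes the supports of all `cᵢ`, hence commutes with them
  have hcomm : ∀ i, Commute w (c i) := fun i => Perm.Disjoint.commute fun m => by
    by_cases hm : c i m = m
    · exact Or.inr hm
    · exact Or.inl (hwA m (Or.inr (Set.mem_iUnion.2 ⟨i, hm⟩)))
  set s := u * w
  set t := (x i₀)⁻¹ * s⁻¹ * y i₀
  refine ⟨s, Subgroup.mem_inf.2 ⟨huw, mul_mem hu (fixingSubgroup_antitone _ _ ?_ hw)⟩,
    t, Subgroup.mem_inf.2 ⟨mul_mem (mul_mem (inv_mem (hx i₀)) (inv_mem huw)) (hy i₀), ?_⟩,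
    fun i => ?_⟩
  · exact fun m hm => Or.inl (Or.inl hm)
  · refine (mem_fixingSubgroup_iff _).2 fun m hm => ?_
    have hvm : v m = m := (mem_fixingSubgroup_iff _).1 hv m hm
    have hwm : w (x i₀ m) = x i₀ m := hwA _ (Or.inl (Or.inr ⟨m, hm, rfl⟩))
    simp [t, s, hxy i₀, hvm, (Equiv.symm_apply_eq w).2 hwm.symm]
  · calc y i = u * c i * u⁻¹ * y i₀ := by rw [hxy i, hxy i₀]; simp only [c]; group
      _ = u * (w * c i * w⁻¹) * u⁻¹ * y i₀ := by rw [(hcomm i).eq, mul_inv_cancel_right]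
      _ = s * x i * t := by simp only [s, t, c]; group

theorem mem_Gfin_iff {n : ℕ} {g : Fin (n + 1) → Perm ℕ} : g ∈ Gfin n ↔ ∀ i, g i ∈ finSupp := by
  simp [Gfin, Subgroup.mem_pi]

theorem const_mem_bbG (n : ℕ) (s : Perm ℕ) : (fun _ => s) ∈ bbG n := fun _ _ => by
  simp

theorem fixSub_eq_fixingSubgroup (α : ℕ) : fixSub α = fixingSubgroup (Perm ℕ) (Set.Icc 1 α) := by
  ext g
  simp only [mem_fixingSubgroup_iff, Set.mem_Icc, Perm.smul_def, and_imp]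
  rfl

theorem mem_diagFix_iff {n α : ℕ} {g : Fin (n + 1) → Perm ℕ} :
    g ∈ diagFix n α ↔ ∃ s ∈ fixingSubgroup (Perm ℕ) (Set.Icc 1 α), (fun _ => s) = g := by
  refine ⟨fun ⟨hfix, hdiag⟩ => ⟨g 0, fixSub_eq_fixingSubgroup α ▸ hfix 0,
    funext fun i => hdiag 0 i⟩, ?_⟩
  rintro ⟨s, hs, rfl⟩
  exact ⟨fun _ => fixSub_eq_fixingSubgroup α ▸ hs, fun _ _ => rfl⟩

theorem const_mem_diagFix_inf_Gfin {n α : ℕ} {s : Perm ℕ}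
    (hs : s ∈ finSupp ⊓ fixingSubgroup (Perm ℕ) (Set.Icc 1 α)) :
    (fun _ => s) ∈ diagFix n α ⊓ Gfin n :=
  Subgroup.mem_inf.2 ⟨mem_diagFix_iff.2 ⟨s, (Subgroup.mem_inf.1 hs).2, rfl⟩,
    mem_Gfin_iff.2 fun _ => (Subgroup.mem_inf.1 hs).1⟩

/-- The natural inclusion `S(∞)^{n+1} → 𝔾` induces a bijection of
double coset spaces `K(α) \ S(∞)^{n+1} / K(β) ≅ 𝕂(α) \ 𝔾 / 𝕂(β)`, where `K(α)`
(resp. `𝕂(α)`) is the diagonal subgroup of elements fixing `1, …, α`. -/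
theorem doset_bijection (n α β : ℕ) :
    ∃ F : DoubleCoset.Quotient (((diagFix n α).subgroupOf (Gfin n)) : Set (Gfin n))
            (((diagFix n β).subgroupOf (Gfin n)) : Set (Gfin n)) ≃
          DoubleCoset.Quotient (((diagFix n α).subgroupOf (bbG n)) : Set (bbG n))
            (((diagFix n β).subgroupOf (bbG n)) : Set (bbG n)),
      ∀ g : Gfin n,
        F (DoubleCoset.mk _ _ g) = DoubleCoset.mk _ _ (Subgroup.inclusion (Gfin_le_bbG n) g) := by
  refine DoubleCoset.exists_equiv_quotient_subgroupOf_of_le (Gfin_le_bbG n) ?_ ?_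
  · intro g hg
    obtain ⟨w, hw, hgw⟩ := exists_mem_fixingSubgroup_mul_mem_finSupp (g 0) (Set.finite_Icc 1 β)
    refine ⟨1, one_mem _, fun _ => w, ⟨mem_diagFix_iff.2 ⟨w, hw, rfl⟩, const_mem_bbG n w⟩,
      mem_Gfin_iff.2 fun i => ?_⟩
    simpa [mul_assoc] using mul_mem (hg i 0) hgw
  · rintro x hx y hy h ⟨hh, -⟩ k ⟨hk, -⟩ rfl
    obtain ⟨u, hu, rfl⟩ := mem_diagFix_iff.1 hh
    obtain ⟨v, hv, rfl⟩ := mem_diagFix_iff.1 hk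
    obtain ⟨s, hs, t, ht, hst⟩ := exists_finSupp_eq_mul_mul (Set.finite_Icc 1 α)
      (Set.finite_Icc 1 β) (mem_Gfin_iff.1 hx) (mem_Gfin_iff.1 hy) hu hv fun _ => rfl
    exact ⟨_, const_mem_diagFix_inf_Gfin hs, _, const_mem_diagFix_inf_Gfin ht, funext hst⟩
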